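/- arXiv:2512.22817 — 6 statements merged into one kernel-verified Lean document; each statement's English description precedes it below -/
import Mathlib

section
/- Let X be a real Hilbert space and let T : X → X be a nonexpansive map with Fix T ≠ ∅. Let (λ_n) be a sequence in [0,1] with ∑_{n∈ℕ} (1−λ_n)λ_n = +∞, let x_0 ∈ X, and define x_{n+1} := (1−λ_n)x_n + λ_n T x_n for all n. Then the sequence (x_n) satisfies x_n − T x_n → 0 strongly. -/
/-!
Fix `p ∈ Fix T`. The Hilbert-space identity
`‖(1-t)u + tv‖² = (1-t)‖u‖² + t‖v‖² - t(1-t)‖u - v‖²` applied to `u = xₙ - p`, `v = T xₙ - p`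
shows that `‖xₙ - p‖²` drops by at least `(1-λₙ)λₙ ‖xₙ - T xₙ‖²` in each step, so
`∑ (1-λₙ)λₙ ‖xₙ - T xₙ‖² < ∞`. The residuals `‖xₙ - T xₙ‖` are nonincreasing, hence converge
to some `L`, and `L > 0` would make `∑ (1-λₙ)λₙ` finite.
-/

open Filter Topology

section Hilbert

variable {X : Type*} [NormedAddCommGroup X] [InnerProductSpace ℝ X]

lemma norm_one_sub_smul_add_smul_sq (u v : X) (t : ℝ) :
    ‖(1 - t) • u + t • v‖ ^ 2 = (1 - t) * ‖u‖ ^ 2 + t * ‖v‖ ^ 2 - t * (1 - t) * ‖u - v‖ ^ 2 := by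
  rw [norm_add_sq_real, norm_sub_sq_real, norm_smul, norm_smul, real_inner_smul_left,
    real_inner_smul_right, mul_pow, mul_pow, Real.norm_eq_abs, Real.norm_eq_abs, sq_abs, sq_abs]
  ring

lemma norm_relaxed_step_sub_sq_add_le {T : X → X} {p x : X} {t : ℝ} (ht : 0 ≤ t)
    (hp : T p = p) (hTx : ‖T x - T p‖ ≤ ‖x - p‖) :
    ‖(1 - t) • x + t • T x - p‖ ^ 2 + (1 - t) * t * ‖x - T x‖ ^ 2 ≤ ‖x - p‖ ^ 2 := by
  have hstep : (1 - t) • x + t • T x - p = (1 - t) • (x - p) + t • (T x - p) := by module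
  have hdiff : x - p - (T x - p) = x - T x := by abel
  have hsq : ‖T x - p‖ ^ 2 ≤ ‖x - p‖ ^ 2 := by
    rw [hp] at hTx
    gcongr
  rw [hstep, norm_one_sub_smul_add_smul_sq, hdiff]
  nlinarith

end Hilbert

lemma norm_relaxed_step_sub_apply_le {E : Type*} [SeminormedAddCommGroup E] [NormedSpace ℝ E]
    {T : E → E} {x : E} {t : ℝ} (ht₀ : 0 ≤ t) (ht₁ : t ≤ 1)
    (hT : ‖T x - T ((1 - t) • x + t • T x)‖ ≤ ‖x - ((1 - t) • x + t • T x)‖) :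
    ‖(1 - t) • x + t • T x - T ((1 - t) • x + t • T x)‖ ≤ ‖x - T x‖ := by
  set y := (1 - t) • x + t • T x
  have hyTx : y - T x = (1 - t) • (x - T x) := by simp only [y]; module
  have hxy : x - y = t • (x - T x) := by simp only [y]; module
  calc ‖y - T y‖ = ‖(y - T x) + (T x - T y)‖ := by rw [sub_add_sub_cancel]
    _ ≤ ‖y - T x‖ + ‖x - y‖ := (norm_add_le _ _).trans (by gcongr)
    _ = ‖x - T x‖ := by
      rw [hyTx, hxy, norm_smul, norm_smul, Real.norm_of_nonneg (by linarith),
        Real.norm_of_nonneg ht₀]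
      ring

lemma summable_of_add_le_of_nonneg {a b : ℕ → ℝ} (ha : ∀ n, 0 ≤ a n) (hb : ∀ n, 0 ≤ b n)
    (hab : ∀ n, a (n + 1) + b n ≤ a n) : Summable b := by
  refine summable_of_sum_range_le hb (c := a 0) fun n => ?_
  have htele : ∑ k ∈ Finset.range n, b k ≤ a 0 - a n := by
    induction n with
    | zero => simp
    | succ m ih => rw [Finset.sum_range_succ]; linarith [hab m]
  linarith [ha n]

lemma tendsto_zero_of_antitone_of_summable_mul_sq {w r : ℕ → ℝ} (hw : ∀ n, 0 ≤ w n)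
    (hw_sum : ¬ Summable w) (hr : ∀ n, 0 ≤ r n) (hr_anti : Antitone r)
    (hwr : Summable fun n => w n * r n ^ 2) : Tendsto r atTop (𝓝 0) := by
  have hbdd : BddBelow (Set.range r) := ⟨0, Set.forall_mem_range.2 hr⟩
  have hlim := tendsto_atTop_ciInf hr_anti hbdd
  suffices hL : ⨅ n, r n = 0 by rwa [hL] at hlim
  by_contra hL
  have hL_le : ∀ n, ⨅ k, r k ≤ r n := ciInf_le hbdd
  have hL_pos : 0 < ⨅ n, r n := lt_of_le_of_ne (le_ciInf hr) (Ne.symm hL)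
  refine hw_sum ((summable_mul_right_iff (pow_ne_zero 2 hL_pos.ne')).1 ?_)
  refine hwr.of_nonneg_of_le (fun n => mul_nonneg (hw n) (sq_nonneg _)) fun n => ?_
  gcongr
  · exact hw n
  · exact hL_le n

theorem km_asymptotic_regularity_general
    {X : Type*} [NormedAddCommGroup X] [InnerProductSpace ℝ X]
    (T : X → X) (hT : ∀ x y : X, ‖T x - T y‖ ≤ ‖x - y‖)
    (hF : (Function.fixedPoints T).Nonempty)
    (lam : ℕ → ℝ) (hlam : ∀ n, lam n ∈ Set.Icc (0 : ℝ) 1)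
    (hdiv : ¬ Summable (fun n => (1 - lam n) * lam n))
    (x : ℕ → X) (hx : ∀ n, x (n + 1) = (1 - lam n) • x n + lam n • T (x n)) :
    Tendsto (fun n => x n - T (x n)) atTop (𝓝 0) := by
  obtain ⟨p, hp⟩ := hF
  have hw : ∀ n, 0 ≤ (1 - lam n) * lam n := fun n =>
    mul_nonneg (sub_nonneg.2 (hlam n).2) (hlam n).1
  have hgain : Summable fun n => (1 - lam n) * lam n * ‖x n - T (x n)‖ ^ 2 :=
    summable_of_add_le_of_nonneg (a := fun n => ‖x n - p‖ ^ 2) (fun _ => by positivity)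
      (fun n => mul_nonneg (hw n) (by positivity)) fun n => by
        rw [hx n]
        exact norm_relaxed_step_sub_sq_add_le (hlam n).1 hp (hT _ _)
  have hanti : Antitone fun n => ‖x n - T (x n)‖ := antitone_nat_of_succ_le fun n => by
    rw [hx n]
    exact norm_relaxed_step_sub_apply_le (hlam n).1 (hlam n).2 (hT _ _)
  exact tendsto_zero_iff_norm_tendsto_zero.2 <|
    tendsto_zero_of_antitone_of_summable_mul_sq hw hdiv (fun _ => norm_nonneg _) hanti hgain

/-- **Reich's theorem (asymptotic regularity part).**
If `T` is a nonexpansive self-map of a real Hilbert space with a fixed point,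
`(λₙ)` lies in `[0,1]` with `∑ (1-λₙ)λₙ = +∞`, and `xₙ₊₁ = (1-λₙ)xₙ + λₙ T xₙ`,
then `xₙ - T xₙ → 0` strongly. -/
theorem km_asymptotic_regularity
    {X : Type*} [NormedAddCommGroup X] [InnerProductSpace ℝ X] [CompleteSpace X]
    (T : X → X) (hT : ∀ x y : X, ‖T x - T y‖ ≤ ‖x - y‖)
    (hF : (Function.fixedPoints T).Nonempty)
    (lam : ℕ → ℝ) (hlam : ∀ n, lam n ∈ Set.Icc (0 : ℝ) 1)
    (hdiv : ¬ Summable (fun n => (1 - lam n) * lam n))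
    (x : ℕ → X) (hx : ∀ n, x (n + 1) = (1 - lam n) • x n + lam n • T (x n)) :
    Tendsto (fun n => x n - T (x n)) atTop (𝓝 0) :=
  km_asymptotic_regularity_general T hT hF lam hlam hdiv x hx
end

section
/- Let X be a real Hilbert space and let T : X → X be a continuous linear nonexpansive operator. Let λ ∈ (0,1), let x_0 ∈ X, and define x_{n+1} := (1−λ)x_n + λ T x_n for all n. Then (x_n) converges strongly to P_F x_0, where F := Fix T and P_F denotes the orthogonal projection of X onto the closed subspace F. -/
/-!
Put `S := (1 - λ) • id + λ • T`, so that `xₙ = Sⁿ x₀`. The identity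
`‖S v‖² = (1 - λ) ‖v‖² + λ ‖T v‖² - λ (1 - λ) ‖v - T v‖²` shows that `S` is nonexpansive and that
`‖Sⁿ z‖²` drops by at least `λ (1 - λ) ‖(id - T) Sⁿ z‖²` at every step; these defects are therefore
summable and `Sⁿ ((id - T) z) = (id - T) (Sⁿ z) → 0`. The maps `Sⁿ` are uniformly `1`-Lipschitz, so
`Sⁿ y → 0` persists on the closure of `range (id - T)`, which contains `Fᗮ`. As `S` fixes `F`
pointwise, `xₙ - P_F x₀ = Sⁿ (x₀ - P_F x₀) → 0`.
-/

open Filter Topology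
open scoped RealInnerProductSpace

theorem norm_smul_add_smul_sq_real {F : Type*} [NormedAddCommGroup F] [InnerProductSpace ℝ F]
    (t : ℝ) (u w : F) :
    ‖(1 - t) • u + t • w‖ ^ 2 = (1 - t) * ‖u‖ ^ 2 + t * ‖w‖ ^ 2 - t * (1 - t) * ‖u - w‖ ^ 2 := by
  rw [norm_add_sq_real, norm_sub_sq_real, norm_smul, norm_smul, real_inner_smul_left,
    real_inner_smul_right, mul_pow, mul_pow, Real.norm_eq_abs, Real.norm_eq_abs, sq_abs, sq_abs]
  ring

theorem tendsto_zero_of_le_sub_succ {a b : ℕ → ℝ} (ha : ∀ n, 0 ≤ a n) (hb : ∀ n, 0 ≤ b n)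
    (h : ∀ n, b n ≤ a n - a (n + 1)) : Tendsto b atTop (𝓝 0) := by
  refine (summable_of_sum_range_le (c := a 0) hb fun n => ?_).tendsto_atTop_zero
  calc ∑ i ∈ Finset.range n, b i ≤ ∑ i ∈ Finset.range n, (a i - a (i + 1)) :=
        Finset.sum_le_sum fun i _ => h i
    _ = a 0 - a n := Finset.sum_range_sub' a n
    _ ≤ a 0 := sub_le_self _ (ha n)

theorem LipschitzWith.isClosed_setOf_tendsto_iterate {α : Type*} [PseudoMetricSpace α]
    {f : α → α} (hf : LipschitzWith 1 f) (z : α) :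
    IsClosed {x | Tendsto (fun n => f^[n] x) atTop (𝓝 z)} :=
  (LipschitzWith.uniformEquicontinuous (fun n => f^[n]) 1 fun n => by
    simpa using hf.iterate n).equicontinuous.isClosed_setOfPred_tendsto continuous_const

section

variable {X : Type*} [NormedAddCommGroup X] [InnerProductSpace ℝ X] {T : X →L[ℝ] X}

theorem orthogonal_range_id_sub_le_ker_id_sub (hT : ∀ x, ‖T x‖ ≤ ‖x‖) :
    (LinearMap.range ((ContinuousLinearMap.id ℝ X - T : X →L[ℝ] X) : X →ₗ[ℝ] X))ᗮ ≤
      LinearMap.ker ((ContinuousLinearMap.id ℝ X - T : X →L[ℝ] X) : X →ₗ[ℝ] X) := by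
  intro u hu
  -- `u ⊥ u - T u` forces `⟪T u, u⟫ = ‖u‖²`, hence `‖u - T u‖² = ‖T u‖² - ‖u‖² ≤ 0`.
  have h_orth : ⟪u - T u, u⟫ = 0 :=
    (Submodule.mem_orthogonal _ u).mp hu _ ⟨u, rfl⟩
  have h_sq : ‖u - T u‖ ^ 2 ≤ 0 := by
    rw [inner_sub_left, real_inner_self_eq_norm_sq, real_inner_comm] at h_orth
    nlinarith [norm_sub_sq_real u (T u), hT u, norm_nonneg (T u)]
  have h_zero : u - T u = 0 := norm_eq_zero.mp (by nlinarith [norm_nonneg (u - T u)])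
  simpa using h_zero

theorem orthogonal_ker_id_sub_le_closure_range_id_sub [CompleteSpace X] (hT : ∀ x, ‖T x‖ ≤ ‖x‖) :
    (LinearMap.ker ((ContinuousLinearMap.id ℝ X - T : X →L[ℝ] X) : X →ₗ[ℝ] X))ᗮ ≤
      (LinearMap.range
        ((ContinuousLinearMap.id ℝ X - T : X →L[ℝ] X) : X →ₗ[ℝ] X)).topologicalClosure := by
  rw [← Submodule.orthogonal_orthogonal_eq_closure]
  exact Submodule.orthogonal_le (orthogonal_range_id_sub_le_ker_id_sub hT)

variable (T) in
def krasnoselskiiMann (lam : ℝ) : X →L[ℝ] X := (1 - lam) • ContinuousLinearMap.id ℝ X + lam • T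

variable {lam : ℝ}

@[simp]
theorem krasnoselskiiMann_apply (v : X) : krasnoselskiiMann T lam v = (1 - lam) • v + lam • T v :=
  rfl

theorem commute_krasnoselskiiMann : Function.Commute T (krasnoselskiiMann T lam) := fun v => by
  simp

theorem norm_sq_krasnoselskiiMann_add_le (hT : ∀ x, ‖T x‖ ≤ ‖x‖) (hlam : 0 ≤ lam) (v : X) :
    ‖krasnoselskiiMann T lam v‖ ^ 2 + lam * (1 - lam) * ‖v - T v‖ ^ 2 ≤ ‖v‖ ^ 2 := by
  rw [krasnoselskiiMann_apply, norm_smul_add_smul_sq_real]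
  nlinarith [pow_le_pow_left₀ (norm_nonneg _) (hT v) 2]

theorem lipschitzWith_one_krasnoselskiiMann (hT : ∀ x, ‖T x‖ ≤ ‖x‖) (hlam : lam ∈ Set.Icc 0 1) :
    LipschitzWith 1 (krasnoselskiiMann T lam) := by
  refine (AddMonoidHomClass.lipschitz_of_bound _ 1 fun v => ?_).weaken (by simp)
  have := norm_sq_krasnoselskiiMann_add_le hT hlam.1 v
  rw [one_mul, ← sq_le_sq₀ (norm_nonneg _) (norm_nonneg _)]
  nlinarith [mul_nonneg (mul_nonneg hlam.1 (sub_nonneg.mpr hlam.2)) (sq_nonneg ‖v - T v‖)]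

theorem tendsto_krasnoselskiiMann_iterate_sub (hT : ∀ x, ‖T x‖ ≤ ‖x‖) (hlam : lam ∈ Set.Ioo 0 1)
    (z : X) : Tendsto (fun n => (krasnoselskiiMann T lam)^[n] (z - T z)) atTop (𝓝 0) := by
  set S := krasnoselskiiMann T lam
  have hc : 0 < lam * (1 - lam) := mul_pos hlam.1 (sub_pos.mpr hlam.2)
  have h_sq : Tendsto (fun n => lam * (1 - lam) * ‖S^[n] z - T (S^[n] z)‖ ^ 2) atTop (𝓝 0) :=
    tendsto_zero_of_le_sub_succ (a := fun n => ‖S^[n] z‖ ^ 2) (fun n => by positivity)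
      (fun n => by positivity) fun n => by
        rw [Function.iterate_succ_apply']
        linarith [norm_sq_krasnoselskiiMann_add_le hT hlam.1.le (S^[n] z)]
  have h_norm : Tendsto (fun n => ‖S^[n] z - T (S^[n] z)‖) atTop (𝓝 0) := by
    have h := (h_sq.const_mul (lam * (1 - lam))⁻¹).sqrt
    simp only [← mul_assoc, inv_mul_cancel₀ hc.ne', one_mul, mul_zero, Real.sqrt_zero,
      Real.sqrt_sq (norm_nonneg _)] at h
    exact h
  refine (tendsto_zero_iff_norm_tendsto_zero.mpr h_norm).congr fun n => ?_
  rw [iterate_map_sub, commute_krasnoselskiiMann.iterate_right n z]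

theorem Function.IsFixedPt.krasnoselskiiMann {p : X} (hp : Function.IsFixedPt T p) :
    Function.IsFixedPt (krasnoselskiiMann T lam) p := by
  rw [Function.IsFixedPt, krasnoselskiiMann_apply, hp.eq, ← add_smul, sub_add_cancel, one_smul]

theorem tendsto_krasnoselskiiMann_iterate [CompleteSpace X] (hT : ∀ x, ‖T x‖ ≤ ‖x‖)
    (hlam : lam ∈ Set.Ioo 0 1) (x₀ : X) :
    Tendsto (fun n => (krasnoselskiiMann T lam)^[n] x₀) atTop
      (𝓝 ((LinearMap.ker ((ContinuousLinearMap.id ℝ X - T : X →L[ℝ] X) : X →ₗ[ℝ] X)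
        ).orthogonalProjectionOnto x₀ : X)) := by
  set F := LinearMap.ker ((ContinuousLinearMap.id ℝ X - T : X →L[ℝ] X) : X →ₗ[ℝ] X)
  set R := LinearMap.range ((ContinuousLinearMap.id ℝ X - T : X →L[ℝ] X) : X →ₗ[ℝ] X)
  set S := krasnoselskiiMann T lam
  set p : X := (F.orthogonalProjectionOnto x₀ : X)
  have h_closure : x₀ - p ∈ closure (R : Set X) := by
    rw [← Submodule.topologicalClosure_coe]
    exact orthogonal_ker_id_sub_le_closure_range_id_sub hT (F.sub_starProjection_mem_orthogonal x₀)
  have h_range : ∀ y ∈ R, Tendsto (fun n => S^[n] y) atTop (𝓝 0) := by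
    rintro _ ⟨z, rfl⟩
    exact tendsto_krasnoselskiiMann_iterate_sub hT hlam z
  have h_zero : Tendsto (fun n => S^[n] (x₀ - p)) atTop (𝓝 0) :=
    closure_minimal h_range ((lipschitzWith_one_krasnoselskiiMann hT
      (Set.Ioo_subset_Icc_self hlam)).isClosed_setOf_tendsto_iterate 0) h_closure
  have h_fixed : ∀ n, S^[n] p = p := by
    have hTp : p - T p = 0 := LinearMap.mem_ker.mp (F.orthogonalProjectionOnto x₀).2
    have hp : Function.IsFixedPt T p := (sub_eq_zero.mp hTp).symm
    exact fun n => (hp.krasnoselskiiMann.iterate n).eq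
  simpa [iterate_map_sub, h_fixed] using h_zero.add_const p

end

/-- **Baillon–Bruck–Reich theorem.** If `T` is a continuous linear nonexpansive operator
on a real Hilbert space, `λ ∈ (0,1)`, and `xₙ₊₁ = (1-λ)xₙ + λ T xₙ`, then `(xₙ)`
converges strongly to the orthogonal projection of `x₀` onto `F := Fix T = ker (Id - T)`. -/
theorem bbr_constant_parameter
    {X : Type*} [NormedAddCommGroup X] [InnerProductSpace ℝ X] [CompleteSpace X]
    (T : X →L[ℝ] X) (hT : ∀ x : X, ‖T x‖ ≤ ‖x‖)
    (lam : ℝ) (hlam : lam ∈ Set.Ioo (0 : ℝ) 1)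
    (x : ℕ → X) (hx : ∀ n, x (n + 1) = (1 - lam) • x n + lam • T (x n)) :
    Tendsto x atTop
      (𝓝 ((LinearMap.ker ((ContinuousLinearMap.id ℝ X - T : X →L[ℝ] X) : X →ₗ[ℝ] X)).orthogonalProjectionOnto (x 0) : X)) := by
  refine (tendsto_krasnoselskiiMann_iterate hT hlam (x 0)).congr fun n => ?_
  induction n with
  | zero => rfl
  | succ n ih => rw [hx, ← ih, Function.iterate_succ_apply', krasnoselskiiMann_apply]
end

section
/- Let X be a real Hilbert space, let T : X → X be a continuous linear nonexpansive operator, and let (λ_n) be a sequence in [0,1] with ∑_{n∈ℕ} (1−λ_n)λ_n = +∞. If g = v − T v for some v ∈ X, then T_{λ_n} T_{λ_{n−1}} ⋯ T_{λ_0} g → 0 strongly as n → ∞. -/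
open Filter Topology RealInnerProductSpace

/-- Key Hilbert space identity for convex combinations. -/
private lemma km_key_identity {X : Type*} [NormedAddCommGroup X] [InnerProductSpace ℝ X]
    (l : ℝ) (a b : X) :
    ‖(1 - l) • a + l • b‖ ^ 2
      = (1 - l) * ‖a‖ ^ 2 + l * ‖b‖ ^ 2 - l * (1 - l) * ‖a - b‖ ^ 2 := by
  have h : ∀ x : X, ‖x‖ ^ 2 = ⟪x, x⟫ := fun x => (real_inner_self_eq_norm_sq x).symm
  simp only [h, inner_add_left, inner_add_right, inner_sub_left, inner_sub_right,
    real_inner_smul_left, real_inner_smul_right]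
  rw [real_inner_comm b a]
  ring

/-- If `T` is a continuous linear nonexpansive operator on a real Hilbert space, `(λₙ)`
lies in `[0,1]` with `∑ (1-λₙ)λₙ = +∞`, and `g = v - T v` for some `v`, then the orbit
`yₙ₊₁ = T_{λₙ} yₙ` starting from `y₀ = g` (so `yₙ₊₁ = T_{λₙ}⋯T_{λ₀} g`) tends to `0`
strongly. -/
theorem km_orbit_of_range_elt_tendsto_zero
    {X : Type*} [NormedAddCommGroup X] [InnerProductSpace ℝ X] [CompleteSpace X]
    (T : X →L[ℝ] X) (hT : ∀ x : X, ‖T x‖ ≤ ‖x‖)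
    (lam : ℕ → ℝ) (hlam : ∀ n, lam n ∈ Set.Icc (0 : ℝ) 1)
    (hdiv : ¬ Summable (fun n => (1 - lam n) * lam n))
    (g v : X) (hg : g = v - T v)
    (y : ℕ → X) (hy0 : y 0 = g)
    (hy : ∀ n, y (n + 1) = (1 - lam n) • y n + lam n • T (y n)) :
    Tendsto y atTop (𝓝 0) := by
  -- the companion orbit starting at v
  set x : ℕ → X := fun n => Nat.rec v (fun n xn => (1 - lam n) • xn + lam n • T xn) n with hxdef
  have hx0 : x 0 = v := rfl
  have hxs : ∀ n, x (n + 1) = (1 - lam n) • x n + lam n • T (x n) := fun n => rfl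
  -- y n = x n - T (x n)
  have hyx : ∀ n, y n = x n - T (x n) := by
    intro n
    induction n with
    | zero => simp [hx0, hy0, hg]
    | succ n ih =>
      rw [hy n, hxs n, ih]
      simp only [map_add, map_sub, ContinuousLinearMap.map_smul]
      module
  -- monotonicity of ‖y n‖
  have hmono : ∀ n, ‖y (n + 1)‖ ≤ ‖y n‖ := by
    intro n
    obtain ⟨h0, h1⟩ := hlam n
    rw [hy n]
    calc ‖(1 - lam n) • y n + lam n • T (y n)‖
        ≤ ‖(1 - lam n) • y n‖ + ‖lam n • T (y n)‖ := norm_add_le _ _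
      _ = (1 - lam n) * ‖y n‖ + lam n * ‖T (y n)‖ := by
          rw [norm_smul, norm_smul, Real.norm_eq_abs, Real.norm_eq_abs,
            abs_of_nonneg (by linarith), abs_of_nonneg h0]
      _ ≤ (1 - lam n) * ‖y n‖ + lam n * ‖y n‖ :=
          add_le_add le_rfl (mul_le_mul_of_nonneg_left (hT _) h0)
      _ = ‖y n‖ := by ring
  have hantitone : Antitone fun n => ‖y n‖ :=
    antitone_nat_of_succ_le hmono
  -- Fejér inequality for x
  have hfejer : ∀ n, ‖x (n + 1)‖ ^ 2 ≤ ‖x n‖ ^ 2 - (1 - lam n) * lam n * ‖y n‖ ^ 2 := by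
    intro n
    obtain ⟨h0, h1⟩ := hlam n
    rw [hxs n, km_key_identity, ← hyx n]
    have hTx : ‖T (x n)‖ ^ 2 ≤ ‖x n‖ ^ 2 :=
      pow_le_pow_left₀ (norm_nonneg _) (hT _) 2
    nlinarith
  -- partial sums bounded
  have hpartial : ∀ n, ∑ k ∈ Finset.range n, (1 - lam k) * lam k * ‖y k‖ ^ 2 ≤ ‖v‖ ^ 2 := by
    intro n
    have : ∑ k ∈ Finset.range n, (1 - lam k) * lam k * ‖y k‖ ^ 2 ≤ ‖v‖ ^ 2 - ‖x n‖ ^ 2 := by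
      induction n with
      | zero => simp [hx0]
      | succ n ih =>
        rw [Finset.sum_range_succ]
        have := hfejer n
        linarith
    nlinarith [norm_nonneg (x n)]
  have hnn : ∀ n, 0 ≤ (1 - lam n) * lam n * ‖y n‖ ^ 2 := by
    intro n
    obtain ⟨h0, h1⟩ := hlam n
    exact mul_nonneg (mul_nonneg (by linarith) h0) (sq_nonneg _)
  have hsummable : Summable fun n => (1 - lam n) * lam n * ‖y n‖ ^ 2 :=
    summable_of_sum_range_le hnn hpartial
  -- the limit of ‖y n‖
  have hbdd : BddBelow (Set.range fun n => ‖y n‖) :=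
    ⟨0, by rintro _ ⟨n, rfl⟩; exact norm_nonneg _⟩
  set L : ℝ := ⨅ n, ‖y n‖ with hL
  have htend : Tendsto (fun n => ‖y n‖) atTop (𝓝 L) :=
    tendsto_atTop_ciInf hantitone hbdd
  have hLle : ∀ n, L ≤ ‖y n‖ := fun n => ciInf_le hbdd n
  have hL0 : 0 ≤ L := le_ciInf fun n => norm_nonneg _
  have hLzero : L = 0 := by
    by_contra hne
    have hLpos : 0 < L := lt_of_le_of_ne hL0 (Ne.symm hne)
    apply hdiv
    have : Summable fun n => (1 - lam n) * lam n * ‖y n‖ ^ 2 / L ^ 2 :=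
      hsummable.div_const _
    refine this.of_nonneg_of_le (fun n => ?_) (fun n => ?_)
    · obtain ⟨h0, h1⟩ := hlam n
      nlinarith
    · obtain ⟨h0, h1⟩ := hlam n
      rw [le_div_iff₀ (by positivity)]
      have hL2 : L ^ 2 ≤ ‖y n‖ ^ 2 := pow_le_pow_left₀ hL0 (hLle n) 2
      exact mul_le_mul_of_nonneg_left hL2 (mul_nonneg (by linarith) h0)
  rw [hLzero] at htend
  exact tendsto_zero_iff_norm_tendsto_zero.mpr htend
end

section
/- Let X be a real Hilbert space, let T : X → X be a continuous linear nonexpansive operator, and let (λ_n) be a sequence in [0,1] with ∑_{n∈ℕ} (1−λ_n)λ_n = +∞. If g belongs to the closure of the range of Id − T, then T_{λ_n} T_{λ_{n−1}} ⋯ T_{λ_0} g → 0 strongly as n → ∞. -/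
open Filter Topology RealInnerProductSpace

section KM
variable {X : Type*} [NormedAddCommGroup X] [InnerProductSpace ℝ X]

lemma km_expand (l : ℝ) (a b : X) :
    ‖(1 - l) • a + l • b‖ ^ 2
      = (1 - l) * ‖a‖ ^ 2 + l * ‖b‖ ^ 2 - l * (1 - l) * ‖a - b‖ ^ 2 := by
  have h : ∀ x : X, ‖x‖ ^ 2 = ⟪x, x⟫ := fun x => (real_inner_self_eq_norm_sq x).symm
  rw [h, h, h, h]
  simp only [inner_add_left, inner_add_right, inner_sub_left, inner_sub_right,
    real_inner_smul_left, real_inner_smul_right]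
  rw [real_inner_comm b a]
  ring

/-- One KM step decreases the squared norm by at least `λ(1-λ)‖x - Tx‖²`. -/
lemma km_step_sq (T : X →L[ℝ] X) (hT : ∀ x : X, ‖T x‖ ≤ ‖x‖)
    {l : ℝ} (hl : l ∈ Set.Icc (0 : ℝ) 1) (x : X) :
    ‖(1 - l) • x + l • T x‖ ^ 2 ≤ ‖x‖ ^ 2 - l * (1 - l) * ‖x - T x‖ ^ 2 := by
  rw [km_expand]
  have h1 : ‖T x‖ ^ 2 ≤ ‖x‖ ^ 2 := by
    have := hT x
    nlinarith [norm_nonneg (T x), norm_nonneg x]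
  nlinarith [hl.1, hl.2]

/-- One KM step is nonexpansive on norms. -/
lemma km_step_norm (T : X →L[ℝ] X) (hT : ∀ x : X, ‖T x‖ ≤ ‖x‖)
    {l : ℝ} (hl : l ∈ Set.Icc (0 : ℝ) 1) (x : X) :
    ‖(1 - l) • x + l • T x‖ ≤ ‖x‖ := by
  calc ‖(1 - l) • x + l • T x‖ ≤ ‖(1 - l) • x‖ + ‖l • T x‖ := norm_add_le _ _
    _ = (1 - l) * ‖x‖ + l * ‖T x‖ := by
        rw [norm_smul, norm_smul, Real.norm_of_nonneg (by linarith [hl.2]),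
          Real.norm_of_nonneg hl.1]
    _ ≤ (1 - l) * ‖x‖ + l * ‖x‖ := by
        have := hT x
        nlinarith [hl.1]
    _ = ‖x‖ := by ring

/-- Residuals of a KM orbit tend to zero. -/
lemma km_residual_tendsto_zero (T : X →L[ℝ] X) (hT : ∀ x : X, ‖T x‖ ≤ ‖x‖)
    (lam : ℕ → ℝ) (hlam : ∀ n, lam n ∈ Set.Icc (0 : ℝ) 1)
    (hdiv : ¬ Summable (fun n => (1 - lam n) * lam n))
    (z : ℕ → X) (hz : ∀ n, z (n + 1) = (1 - lam n) • z n + lam n • T (z n)) :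
    Tendsto (fun n => ‖z n - T (z n)‖) atTop (𝓝 0) := by
  set d : ℕ → ℝ := fun n => ‖z n - T (z n)‖ with hd
  -- the residual vector satisfies the same recurrence
  have hres : ∀ n, z (n + 1) - T (z (n + 1))
      = (1 - lam n) • (z n - T (z n)) + lam n • T (z n - T (z n)) := by
    intro n
    rw [hz n]
    simp only [map_add, map_smul, map_sub, smul_sub]
    abel
  have hdanti : ∀ n, d (n + 1) ≤ d n := by
    intro n
    rw [hd]
    simp only
    rw [hres n]
    exact km_step_norm T hT (hlam n) _
  have hdanti : Antitone d := antitone_nat_of_succ_le hdanti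
  have hdnonneg : ∀ n, 0 ≤ d n := fun n => norm_nonneg _
  -- partial sums bound
  have hsum : ∀ N, ∑ k ∈ Finset.range N, lam k * (1 - lam k) * d k ^ 2 ≤ ‖z 0‖ ^ 2 := by
    intro N
    have key : ∀ N, ∑ k ∈ Finset.range N, lam k * (1 - lam k) * d k ^ 2
        ≤ ‖z 0‖ ^ 2 - ‖z N‖ ^ 2 := by
      intro N
      induction N with
      | zero => simp
      | succ n ih =>
        rw [Finset.sum_range_succ]
        have step : ‖z (n + 1)‖ ^ 2 ≤ ‖z n‖ ^ 2 - lam n * (1 - lam n) * d n ^ 2 := by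
          rw [hz n]
          exact km_step_sq T hT (hlam n) (z n)
        linarith
    have := key N
    nlinarith [sq_nonneg ‖z N‖]
  -- limit of the antitone sequence d
  have hbdd : BddBelow (Set.range d) := ⟨0, fun x ⟨n, hn⟩ => hn ▸ hdnonneg n⟩
  have hlim : Tendsto d atTop (𝓝 (⨅ n, d n)) := tendsto_atTop_ciInf hdanti hbdd
  have hc0 : 0 ≤ ⨅ n, d n := le_ciInf hdnonneg
  have hceq : ⨅ n, d n = 0 := by
    by_contra hne
    have hc : 0 < ⨅ n, d n := lt_of_le_of_ne hc0 (Ne.symm hne)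
    set c := ⨅ n, d n with hcdef
    have hge : ∀ n, c ≤ d n := fun n => ciInf_le hbdd n
    -- then λ(1-λ) is summable, contradiction
    apply hdiv
    apply summable_of_sum_range_le (c := ‖z 0‖ ^ 2 / c ^ 2)
    · intro n
      have h1 := (hlam n).1
      have h2 := (hlam n).2
      nlinarith
    · intro N
      have h1 : ∀ k, c ^ 2 * ((1 - lam k) * lam k) ≤ lam k * (1 - lam k) * d k ^ 2 := by
        intro k
        have hgk := hge k
        have hnk := hdnonneg k
        have ha := (hlam k).1
        have hb := (hlam k).2
        have hsq : c ^ 2 ≤ d k ^ 2 := by nlinarith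
        have hll : (0:ℝ) ≤ (1 - lam k) * lam k := mul_nonneg (by linarith) ha
        nlinarith [mul_le_mul_of_nonneg_left hsq hll]
      have h2 : c ^ 2 * ∑ i ∈ Finset.range N, (1 - lam i) * lam i
          ≤ ∑ k ∈ Finset.range N, lam k * (1 - lam k) * d k ^ 2 := by
        rw [Finset.mul_sum]
        exact Finset.sum_le_sum fun k _ => h1 k
      have hc2 : (0:ℝ) < c ^ 2 := by positivity
      rw [le_div_iff₀ hc2]
      nlinarith [h2, hsum N]
  rw [hceq] at hlim
  exact hlim

end KM

/-- If `T` is a continuous linear nonexpansive operator on a real Hilbert space, `(λₙ)`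
lies in `[0,1]` with `∑ (1-λₙ)λₙ = +∞`, and `g` lies in the closure of the range of
`Id - T`, then the orbit `yₙ₊₁ = T_{λₙ} yₙ` starting from `y₀ = g`
(so `yₙ₊₁ = T_{λₙ}⋯T_{λ₀} g`) tends to `0` strongly. -/
theorem km_orbit_of_closure_range_elt_tendsto_zero
    {X : Type*} [NormedAddCommGroup X] [InnerProductSpace ℝ X] [CompleteSpace X]
    (T : X →L[ℝ] X) (hT : ∀ x : X, ‖T x‖ ≤ ‖x‖)
    (lam : ℕ → ℝ) (hlam : ∀ n, lam n ∈ Set.Icc (0 : ℝ) 1)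
    (hdiv : ¬ Summable (fun n => (1 - lam n) * lam n))
    (g : X) (hg : g ∈ closure {w : X | ∃ v : X, w = v - T v})
    (y : ℕ → X) (hy0 : y 0 = g)
    (hy : ∀ n, y (n + 1) = (1 - lam n) • y n + lam n • T (y n)) :
    Tendsto y atTop (𝓝 0) := by
  -- the orbit map from an arbitrary initial point
  set orbit : X → ℕ → X :=
    fun x0 n => Nat.rec x0 (fun k zk => (1 - lam k) • zk + lam k • T zk) n with horb
  have horb0 : ∀ x0, orbit x0 0 = x0 := fun _ => rfl
  have horbS : ∀ x0 n,
      orbit x0 (n + 1) = (1 - lam n) • orbit x0 n + lam n • T (orbit x0 n) :=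
    fun _ _ => rfl
  -- y is the orbit of g
  have hyorb : ∀ n, y n = orbit g n := by
    intro n
    induction n with
    | zero => rw [hy0, horb0]
    | succ k ih => rw [hy k, ih, horbS]
  -- contraction in initial data
  have hcontr : ∀ (a b : X) (n : ℕ), ‖orbit a n - orbit b n‖ ≤ ‖a - b‖ := by
    intro a b n
    induction n with
    | zero => rw [horb0, horb0]
    | succ k ih =>
      have hdiff : orbit a (k + 1) - orbit b (k + 1)
          = (1 - lam k) • (orbit a k - orbit b k)
            + lam k • T (orbit a k - orbit b k) := by
        rw [horbS, horbS]
        simp only [smul_sub, map_sub]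
        abel
      rw [hdiff]
      exact (km_step_norm T hT (hlam k) _).trans ih
  -- orbits starting in the range of Id - T tend to 0
  have hrange : ∀ v : X, Tendsto (orbit (v - T v)) atTop (𝓝 0) := by
    intro v
    have hzrec : ∀ n, orbit v (n + 1) = (1 - lam n) • orbit v n + lam n • T (orbit v n) :=
      horbS v
    have hres := km_residual_tendsto_zero T hT lam hlam hdiv (orbit v) hzrec
    have heq : ∀ n, orbit (v - T v) n = orbit v n - T (orbit v n) := by
      intro n
      induction n with
      | zero => rw [horb0, horb0]
      | succ k ih =>
        rw [horbS, ih, horbS v k]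
        simp only [map_add, map_smul, map_sub, smul_sub]
        abel
    rw [tendsto_zero_iff_norm_tendsto_zero]
    refine hres.congr fun n => ?_
    rw [heq n]
  -- approximation argument
  rw [NormedAddCommGroup.tendsto_nhds_zero]
  intro ε hε
  obtain ⟨w, hwS, hwd⟩ := Metric.mem_closure_iff.mp hg (ε / 2) (by linarith)
  obtain ⟨v, hv⟩ := hwS
  have hw0 : Tendsto (orbit w) atTop (𝓝 0) := hv ▸ hrange v
  have hev : ∀ᶠ n in atTop, ‖orbit w n‖ < ε / 2 :=
    (NormedAddCommGroup.tendsto_nhds_zero.mp hw0) (ε / 2) (by linarith)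
  filter_upwards [hev] with n hn
  have h1 : ‖y n‖ ≤ ‖orbit g n - orbit w n‖ + ‖orbit w n‖ := by
    rw [hyorb n]
    calc ‖orbit g n‖ = ‖(orbit g n - orbit w n) + orbit w n‖ := by
          rw [sub_add_cancel]
      _ ≤ ‖orbit g n - orbit w n‖ + ‖orbit w n‖ := norm_add_le _ _
  have h2 : ‖orbit g n - orbit w n‖ ≤ ‖g - w‖ := hcontr g w n
  have h3 : ‖g - w‖ < ε / 2 := by rwa [← dist_eq_norm]
  linarith
end

section
/- Let X be a real Hilbert space, let T : X → X be a continuous linear nonexpansive operator with F := Fix T, and let (λ_n) be any sequence in [0,1]. Let x_0 ∈ X, write f_0 := P_F x_0 and g_0 := P_{F^⊥} x_0, and define x_{n+1} := (1−λ_n)x_n + λ_n T x_n for all n. Then for every n, x_{n+1} = P_F x_0 + T_{λ_n} T_{λ_{n−1}} ⋯ T_{λ_0} g_0. -/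
/-! Each relaxation `T_λ = (1 - λ) Id + λ T` is linear and fixes `F` pointwise, and
`x₀ = P_F x₀ + P_{F^⊥} x₀`; so the iterates of `x₀` stay exactly `P_F x₀` away from those of
`P_{F^⊥} x₀`. -/

section Relaxation

variable {R M : Type*} [Ring R] [AddCommGroup M] [Module R M]

theorem relaxation_add_of_apply_eq_self (T : M →ₗ[R] M) (t : R) {p : M} (hp : T p = p) (v : M) :
    (1 - t) • (p + v) + t • T (p + v) = p + ((1 - t) • v + t • T v) := by
  rw [map_add, hp, smul_add, smul_add, add_add_add_comm, ← add_smul, sub_add_cancel, one_smul]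

theorem relaxation_iterate_eq_add_of_apply_eq_self (T : M →ₗ[R] M) (t : ℕ → R) {p : M}
    (hp : T p = p) {x y : ℕ → M} (h0 : x 0 = p + y 0)
    (hx : ∀ n, x (n + 1) = (1 - t n) • x n + t n • T (x n))
    (hy : ∀ n, y (n + 1) = (1 - t n) • y n + t n • T (y n)) :
    ∀ n, x n = p + y n
  | 0 => h0
  | n + 1 => by
    rw [hx, hy, relaxation_iterate_eq_add_of_apply_eq_self T t hp h0 hx hy n,
      relaxation_add_of_apply_eq_self T (t n) hp]

end Relaxation

theorem km_iterate_decomposition_general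
    {X : Type*} [NormedAddCommGroup X] [InnerProductSpace ℝ X] [CompleteSpace X]
    (T : X →L[ℝ] X)
    (lam : ℕ → ℝ)
    (x : ℕ → X) (hx : ∀ n, x (n + 1) = (1 - lam n) • x n + lam n • T (x n))
    (y : ℕ → X)
    (hy0 : y 0 =
      (Submodule.orthogonalProjectionOnto (LinearMap.ker ((ContinuousLinearMap.id ℝ X - T : X →L[ℝ] X) : X →ₗ[ℝ] X))ᗮ (x 0) : X))
    (hy : ∀ n, y (n + 1) = (1 - lam n) • y n + lam n • T (y n)) :
    ∀ n : ℕ, x (n + 1) =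
      (Submodule.orthogonalProjectionOnto (LinearMap.ker ((ContinuousLinearMap.id ℝ X - T : X →L[ℝ] X) : X →ₗ[ℝ] X)) (x 0) : X)
        + y (n + 1) := by
  set F := LinearMap.ker ((ContinuousLinearMap.id ℝ X - T : X →L[ℝ] X) : X →ₗ[ℝ] X)
  set p : X := (F.orthogonalProjectionOnto (x 0) : X)
  have hTp : T p = p :=
    (sub_eq_zero.mp (LinearMap.mem_ker.mp (F.orthogonalProjectionOnto (x 0)).2)).symm
  have h0 : x 0 = p + y 0 := by
    rw [hy0]
    exact (F.starProjection_add_starProjection_orthogonal (x 0)).symm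
  exact fun n => relaxation_iterate_eq_add_of_apply_eq_self (T : X →ₗ[ℝ] X) lam hTp h0 hx hy (n + 1)

/-- For a continuous linear nonexpansive operator `T` on a real Hilbert space with
`F := Fix T = ker (Id - T)`, any `(λₙ)` in `[0,1]`, and the iteration
`xₙ₊₁ = (1-λₙ)xₙ + λₙ T xₙ`, we have `xₙ₊₁ = P_F x₀ + T_{λₙ}⋯T_{λ₀} g₀` where
`g₀ = P_{F^⊥} x₀` and `y` is the orbit of `g₀` (i.e. `y₀ = g₀`, `yₙ₊₁ = T_{λₙ} yₙ`,
so `yₙ₊₁ = T_{λₙ}⋯T_{λ₀} g₀`). -/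
theorem km_iterate_decomposition
    {X : Type*} [NormedAddCommGroup X] [InnerProductSpace ℝ X] [CompleteSpace X]
    (T : X →L[ℝ] X) (hT : ∀ x : X, ‖T x‖ ≤ ‖x‖)
    (lam : ℕ → ℝ) (hlam : ∀ n, lam n ∈ Set.Icc (0 : ℝ) 1)
    (x : ℕ → X) (hx : ∀ n, x (n + 1) = (1 - lam n) • x n + lam n • T (x n))
    (y : ℕ → X)
    (hy0 : y 0 =
      (Submodule.orthogonalProjectionOnto (LinearMap.ker ((ContinuousLinearMap.id ℝ X - T : X →L[ℝ] X) : X →ₗ[ℝ] X))ᗮ (x 0) : X))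
    (hy : ∀ n, y (n + 1) = (1 - lam n) • y n + lam n • T (y n)) :
    ∀ n : ℕ, x (n + 1) =
      (Submodule.orthogonalProjectionOnto (LinearMap.ker ((ContinuousLinearMap.id ℝ X - T : X →L[ℝ] X) : X →ₗ[ℝ] X)) (x 0) : X)
        + y (n + 1) :=
  km_iterate_decomposition_general T lam x hx y hy0 hy
end

section
/- Let X be a real Hilbert space, let x_0 ∈ X with x_0 ≠ 0, let T := −Id : X → X, and let (λ_n) be a sequence in [0, 1/2) with ∑_{n∈ℕ} (1−λ_n)λ_n < +∞. Define x_{n+1} := (1−λ_n)x_n + λ_n T x_n for all n. Then (x_n) does not converge to any point of Fix T = {0}; that is, (x_n) does not converge to 0. -/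
open Filter Topology

/-- For `T = -Id` on a real Hilbert space, `x₀ ≠ 0`, and `(λₙ)` in `[0, 1/2)` with
`∑ (1-λₙ)λₙ < +∞`, the Krasnoselskii–Mann iterates do not converge to `0`, the unique
fixed point of `T`. -/
theorem km_neg_id_not_tendsto_fixed_point
    {X : Type*} [NormedAddCommGroup X] [InnerProductSpace ℝ X] [CompleteSpace X]
    (T : X → X) (hT : T = fun z : X => -z)
    (lam : ℕ → ℝ) (hlam : ∀ n, lam n ∈ Set.Ico (0 : ℝ) (1 / 2))
    (hsum : Summable (fun n => (1 - lam n) * lam n))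
    (x : ℕ → X) (hx0 : x 0 ≠ 0)
    (hx : ∀ n, x (n + 1) = (1 - lam n) • x n + lam n • T (x n)) :
    ¬ Tendsto x atTop (𝓝 0) := by
  -- recurrence
  have key : ∀ n, x (n + 1) = (1 - 2 * lam n) • x n := by
    intro n
    rw [hx n, hT]
    simp only
    rw [smul_neg, ← sub_eq_add_neg, ← sub_smul]
    ring_nf
  have hlam0 : ∀ n, 0 ≤ lam n := fun n => (hlam n).1
  have hlam2 : ∀ n, 1 - 2 * lam n > 0 := by
    intro n
    have := (hlam n).2
    linarith
  have hnorm : ∀ n, ‖x (n + 1)‖ = (1 - 2 * lam n) * ‖x n‖ := by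
    intro n
    rw [key n, norm_smul, Real.norm_eq_abs, abs_of_pos (hlam2 n)]
  have hpos : ∀ n, 0 < ‖x n‖ := by
    intro n
    induction n with
    | zero => exact norm_pos_iff.mpr hx0
    | succ k ih => rw [hnorm k]; exact mul_pos (hlam2 k) ih
  -- summability of 2*lam
  have hsum2 : Summable (fun n => 2 * lam n) := by
    apply Summable.of_nonneg_of_le (fun n => by have := hlam0 n; linarith)
      (fun n => ?_) (hsum.mul_left 4)
    have h1 := (hlam n).2
    have h0 := hlam0 n
    nlinarith
  intro htend
  -- tail sums tend to 0
  have htail : Tendsto (fun N => ∑' k, 2 * lam (k + N)) atTop (𝓝 0) :=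
    tendsto_sum_nat_add (fun n => 2 * lam n)
  obtain ⟨N, hN⟩ := (htail.eventually (eventually_lt_nhds (by norm_num : (0:ℝ) < 1/2))).exists
  -- lower bound for n ≥ N
  have hshift : Summable (fun k => 2 * lam (k + N)) := (summable_nat_add_iff N).mpr hsum2
  have lower : ∀ n, N ≤ n → ‖x N‖ * (1 - ∑ k ∈ Finset.Ico N n, 2 * lam k) ≤ ‖x n‖ := by
    intro n hn
    induction n with
    | zero =>
      simp_all
    | succ m ih =>
      rcases Nat.lt_or_ge N (m + 1) with h | h
      · have hm : N ≤ m := Nat.lt_succ_iff.mp h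
        have ihm := ih hm
        rw [hnorm m, Finset.sum_Ico_succ_top hm]
        have hs0 : 0 ≤ ∑ k ∈ Finset.Ico N m, 2 * lam k :=
          Finset.sum_nonneg fun k _ => by have := hlam0 k; linarith
        nlinarith [mul_le_mul_of_nonneg_left ihm (le_of_lt (hlam2 m)), hpos N, hlam0 m, mul_nonneg (mul_nonneg (norm_nonneg (x N)) (hlam0 m)) hs0]
      · have : N = m + 1 := le_antisymm hn h
        subst this
        simp
    -- done
  have hfin : ∀ n, N ≤ n → ‖x N‖ / 2 ≤ ‖x n‖ := by
    intro n hn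
    have hle : ∑ k ∈ Finset.Ico N n, 2 * lam k ≤ ∑' k, 2 * lam (k + N) := by
      rw [Finset.sum_Ico_eq_sum_range]
      have := Summable.sum_le_tsum (Finset.range (n - N))
        (fun k _ => by have := hlam0 (k + N); linarith) hshift
      simpa [add_comm] using this
    have := lower n hn
    have hxN := hpos N
    nlinarith
  have hlt : ∀ᶠ n in atTop, ‖x n‖ < ‖x N‖ / 2 := by
    have hnz : Tendsto (fun n => ‖x n‖) atTop (𝓝 0) := by simpa using htend.norm
    exact hnz.eventually (eventually_lt_nhds (by linarith [hpos N] : (0:ℝ) < ‖x N‖ / 2))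
  obtain ⟨n, hn1, hn2⟩ := ((eventually_ge_atTop N).and hlt).exists
  exact absurd (hfin n hn1) (not_le.mpr hn2)
end
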